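/- arXiv:2006.12178 — 5 statements merged into one kernel-verified Lean document; each statement's English description precedes it below -/
import Mathlib

section
/- There is no monotonic self-referential Gödel numbering for standard numerals. Precisely: let ξ be an injective numbering of an arithmetical language satisfying monotonicity with respect to the strict sub-expression relation (ξ(A) < ξ(B) whenever A is a strict sub-expression of B). Then there is a formula A(x) such that for no n ∈ ℕ does ξ(A(n̲)) = n, where n̲ is the standard numeral S...S0 with n occurrences of S. -/
/-!
The numeral `n̲ = Sⁿ0` is a chain of `n` strict sub-expressions, so monotonicity forces
`ξ(n̲) ≥ n`. Any formula `B(x)` in which `x` occurs has `n̲` as a strict sub-expression of `B(n̲)`,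
hence `ξ(B(n̲)) > ξ(n̲) ≥ n`, and `B` is the required formula.
-/

theorem strictMono_code_iterate {α : Type*} (ξ : α → ℕ) (f : α → α)
    (hf : ∀ a, ξ a < ξ (f a)) (a : α) : StrictMono fun n => ξ (f^[n] a) :=
  strictMono_nat_of_lt_succ fun n => by
    simpa only [Function.iterate_succ_apply'] using hf (f^[n] a)

theorem le_code_iterate {α : Type*} (ξ : α → ℕ) (f : α → α)
    (hf : ∀ a, ξ a < ξ (f a)) (a : α) (n : ℕ) : n ≤ ξ (f^[n] a) :=
  (strictMono_code_iterate ξ f hf a).id_le n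

theorem no_monotonic_selfReferential_standard_numerals_general {Fm FmX Tm : Type*}
    (subst : FmX → Tm → Fm)
    (zeroTm : Tm) (STm : Tm → Tm)
    (sub : (Fm ⊕ Tm) → (Fm ⊕ Tm) → Prop)
    (ξ : Fm ⊕ Tm → ℕ)
    -- t is a strict sub-expression of S t
    (hS : ∀ t : Tm, sub (Sum.inr t) (Sum.inr (STm t)))
    -- the language has a formula B(x) in which x occurs freely at least once
    (hB : ∃ B : FmX, ∀ t : Tm, sub (Sum.inr t) (Sum.inl (subst B t)))
    -- monotonicity: codes strictly increase along the strict sub-expression relation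
    (mono : ∀ e f : Fm ⊕ Tm, sub e f → ξ e < ξ f) :
    ∃ A : FmX, ∀ n : ℕ, ξ (Sum.inl (subst A (STm^[n] zeroTm))) ≠ n := by
  obtain ⟨B, hBsub⟩ := hB
  refine ⟨B, fun n => ne_of_gt ?_⟩
  have numeral_code : n ≤ ξ (Sum.inr (STm^[n] zeroTm)) :=
    le_code_iterate (ξ ∘ Sum.inr) STm (fun t => mono _ _ (hS t)) zeroTm n
  exact numeral_code.trans_lt (mono _ _ (hBsub _))

/-- There is no monotonic self-referential Gödel numbering for standard numerals.
Let `ξ` be an injective numbering of an arithmetical language (with codes of terms and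
formulas given jointly by `ξ : Fm ⊕ Tm → ℕ`) which is monotonic with respect to the
strict sub-expression relation `sub`. Then there is a formula `A(x)` such that for no
`n` does `ξ(A(n̲)) = n`, where `n̲ = S^n 0` is the standard numeral of `n`.

`subst A t` denotes `A(t)`; `orX` is disjunction of formulas with free variable `x`;
the standard numeral of `n` is `STm^[n] zeroTm`. -/
theorem no_monotonic_selfReferential_standard_numerals {Fm FmX Tm : Type*}
    (subst : FmX → Tm → Fm)
    (orX : FmX → FmX → FmX)
    (zeroTm : Tm) (STm : Tm → Tm)
    (sub : (Fm ⊕ Tm) → (Fm ⊕ Tm) → Prop)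
    (ξ : Fm ⊕ Tm → ℕ) (hξ : Function.Injective ξ)
    -- t is a strict sub-expression of S t
    (hS : ∀ t : Tm, sub (Sum.inr t) (Sum.inr (STm t)))
    -- each disjunct of a substituted disjunction is a strict sub-expression of it
    (hOr : ∀ (A B : FmX) (t : Tm), sub (Sum.inl (subst B t)) (Sum.inl (subst (orX A B) t)))
    -- the language has a formula B(x) in which x occurs freely at least once
    (hB : ∃ B : FmX, ∀ t : Tm, sub (Sum.inr t) (Sum.inl (subst B t)))
    -- monotonicity: codes strictly increase along the strict sub-expression relation
    (mono : ∀ e f : Fm ⊕ Tm, sub e f → ξ e < ξ f) :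
    ∃ A : FmX, ∀ n : ℕ, ξ (Sum.inl (subst A (STm^[n] zeroTm))) ≠ n :=
  no_monotonic_selfReferential_standard_numerals_general subst zeroTm STm sub ξ hS hB mono
end

section
/- Let ν be a numeral function for a language L and ξ a numbering of L satisfying (M3) ξ(s) < ξ(A) whenever term s occurs strictly in formula A, and (M4*) ξ(A) ≤ ξ(ν(ξ(A))) for all formulas A. Then ξ is not self-referential for ν: there is no formula A(x) with free variable x occurring in it and n ∈ ℕ with ξ(A(ν(n))) = n. -/
/-- Let `ν` be a numeral function and `ξ` a numbering satisfying
(M3) `ξ s < ξ A` whenever the term `s` occurs strictly in the formula `A`, and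
(M4*) `ξ A ≤ ξ (ν (ξ A))` for all formulas `A`. Then `ξ` is not self-referential for
`ν`: there is no formula `A(x)` with the free variable `x` occurring in it and no
`n ∈ ℕ` with `ξ(A(ν n)) = n`. -/
theorem not_selfReferential_of_M3_M4star {Fm FmX Tm : Type*}
    (subst : FmX → Tm → Fm)
    (occursIn : Tm → Fm → Prop)
    (ξ : Fm ⊕ Tm → ℕ)
    (ν : ℕ → Tm)
    (M3 : ∀ (s : Tm) (A : Fm), occursIn s A → ξ (Sum.inr s) < ξ (Sum.inl A))
    (M4star : ∀ A : Fm, ξ (Sum.inl A) ≤ ξ (Sum.inr (ν (ξ (Sum.inl A))))) :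
    ∀ A : FmX, (∀ t : Tm, occursIn t (subst A t)) →
      ∀ n : ℕ, ξ (Sum.inl (subst A (ν n))) ≠ n := by
  intro A hocc n hn
  have numeral_lt : ξ (Sum.inr (ν n)) < n := by
    simpa only [hn] using M3 (ν n) _ (hocc (ν n))
  have le_numeral : n ≤ ξ (Sum.inr (ν n)) := by
    simpa only [hn] using M4star (subst A (ν n))
  exact numeral_lt.not_ge le_numeral
end

section
/- Let α be a string over an alphabet extended with a fresh symbol c, and β a non-empty string over the original alphabet. Let p be the number of distinct substrings of α, q the number of distinct substrings of β, and r = |β|. Then the number of distinct substrings of α[c := β] (the result of replacing every occurrence of c in α by β) is at most (p − 1)·r² + q, and hence at most p·r² + 1. -/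
/-- Replacement of every occurrence of the fresh symbol `c` (represented by `none`)
in the string `α` over the extended alphabet `Option A` by the string `β` over `A`. -/
def substC {A : Type*} (α : List (Option A)) (β : List A) : List (Option A) :=
  α.flatMap fun x => x.elim (β.map some) (fun a => [a])

/-!
`α[c := β]` is the concatenation of blocks of length at most `r = |β|`, one for each letter
of `α`. A non-empty substring of it is therefore the concatenation of the blocks of a
non-empty substring `δ` of `α`, with fewer than `r` letters cut off at each end; the triple
`(δ, #cut on the left, #cut on the right)` ranges over at most `(p - 1)·r²` values, and the
empty substring adds `1 ≤ q`.
-/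

namespace List

variable {X Y : Type*} {f : X → List Y} {r : ℕ}

theorem finite_setOf_isInfix (l : List X) : {γ | γ <:+: l}.Finite :=
  l.sublists.finite_toSet.subset fun _ h => mem_sublists.2 h.sublist

theorem exists_prefix_flatMap_eq_append (hf : ∀ x, (f x).length ≤ r) :
    ∀ {l : List X} {γ : List Y}, γ <+: l.flatMap f → γ ≠ [] →
      ∃ δ t, δ <+: l ∧ δ ≠ [] ∧ t.length < r ∧ γ ++ t = δ.flatMap f
  | [], _, hγ, hne => absurd (prefix_nil.1 hγ) hne
  | x :: l, γ, ⟨t, ht⟩, hne => by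
    have hγ : 0 < γ.length := length_pos_iff.2 hne
    have hx := hf x
    rw [flatMap_cons, append_eq_append_iff] at ht
    rcases ht with ⟨t', hfx, -⟩ | ⟨γ', rfl, hl⟩
    · rw [hfx, length_append] at hx
      exact ⟨[x], t', (prefix_cons_inj x).2 nil_prefix, cons_ne_nil _ _, by omega,
        by simp [hfx]⟩
    · rcases eq_or_ne γ' [] with rfl | hγ'
      · rw [append_nil] at hγ
        exact ⟨[x], [], (prefix_cons_inj x).2 nil_prefix, cons_ne_nil _ _, hγ.trans_le hx,
          by simp⟩
      · obtain ⟨δ, t, hδ, -, ht, hδt⟩ :=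
          exists_prefix_flatMap_eq_append hf ⟨_, hl.symm⟩ hγ'
        exact ⟨x :: δ, t, (prefix_cons_inj x).2 hδ, cons_ne_nil _ _, ht, by simp [← hδt]⟩

theorem exists_suffix_flatMap_eq_append (hf : ∀ x, (f x).length ≤ r) {l : List X}
    {γ : List Y} (hγ : γ <:+ l.flatMap f) (hne : γ ≠ []) :
    ∃ δ s, δ <:+ l ∧ δ ≠ [] ∧ s.length < r ∧ s ++ γ = δ.flatMap f := by
  have hrev : γ.reverse <+: l.reverse.flatMap (reverse ∘ f) := by
    simpa [← reverse_flatMap] using hγ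
  obtain ⟨δ, s, hδ, hδne, hs, hδs⟩ :=
    exists_prefix_flatMap_eq_append (f := reverse ∘ f) (by simpa using hf) hrev
      (by simpa using hne)
  refine ⟨δ.reverse, s.reverse, ?_, by simpa using hδne, by simpa using hs, ?_⟩
  · exact reverse_prefix.1 (by simpa using hδ)
  · have := congrArg reverse hδs
    rwa [← reverse_reverse δ, ← reverse_flatMap, reverse_reverse, reverse_append,
      reverse_reverse] at this

theorem exists_infix_flatMap_eq_append (hf : ∀ x, (f x).length ≤ r) {l : List X}
    {γ : List Y} (hγ : γ <:+: l.flatMap f) (hne : γ ≠ []) :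
    ∃ δ s t, δ <:+: l ∧ δ ≠ [] ∧ s.length < r ∧ t.length < r ∧
      s ++ γ ++ t = δ.flatMap f := by
  obtain ⟨η, hγη, hη⟩ := infix_iff_prefix_suffix.1 hγ
  obtain ⟨ε, s, hε, -, hs, hsη⟩ :=
    exists_suffix_flatMap_eq_append hf hη fun h => hne (prefix_nil.1 (h ▸ hγη))
  have hsγ : s ++ γ <+: ε.flatMap f := hsη ▸ (prefix_append_right_inj s).2 hγη
  obtain ⟨δ, t, hδ, hδne, ht, hδt⟩ :=
    exists_prefix_flatMap_eq_append hf hsγ (by simp [hne])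
  exact ⟨δ, s, t, hδ.isInfix.trans hε.isInfix, hδne, hs, ht, hδt⟩

theorem ncard_setOf_isInfix_flatMap_le (hf : ∀ x, (f x).length ≤ r) (l : List X) :
    {γ | γ <:+: l.flatMap f}.ncard ≤ ({δ | δ <:+: l}.ncard - 1) * r ^ 2 + 1 := by
  set D := {δ | δ <:+: l} \ {[]}
  have hcover : {γ | γ <:+: l.flatMap f} ⊆
      insert [] ((fun z : List X × ℕ × ℕ => ((z.1.flatMap f).drop z.2.1).rdrop z.2.2) ''
        D ×ˢ Set.Iio r ×ˢ Set.Iio r) := by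
    intro γ hγ
    rcases eq_or_ne γ [] with rfl | hne
    · exact Set.mem_insert _ _
    obtain ⟨δ, s, t, hδ, hδne, hs, ht, hδst⟩ := exists_infix_flatMap_eq_append hf hγ hne
    exact Set.mem_insert_of_mem _
      ⟨(δ, s.length, t.length), ⟨⟨hδ, hδne⟩, hs, ht⟩, by simp [← hδst]⟩
  have hfin : (D ×ˢ Set.Iio r ×ˢ Set.Iio r).Finite :=
    (finite_setOf_isInfix l).sdiff.prod ((Set.finite_Iio r).prod (Set.finite_Iio r))
  have hD : D.ncard = {δ | δ <:+: l}.ncard - 1 := Set.ncard_sdiff_singleton_of_mem nil_infix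
  calc {γ | γ <:+: l.flatMap f}.ncard
      ≤ _ := Set.ncard_le_ncard hcover ((hfin.image _).insert _)
    _ ≤ (D ×ˢ Set.Iio r ×ˢ Set.Iio r).ncard + 1 :=
        (Set.ncard_insert_le _ _).trans (Nat.add_le_add_right (Set.ncard_image_le hfin) 1)
    _ = _ := by simp [Set.ncard_prod, hD, sq]

end List

theorem substrings_of_subst_le_general {A : Type*} (α : List (Option A)) (β : List A)
    (hβ : β ≠ [])
    (p q r : ℕ)
    (hp : p = {γ : List (Option A) | γ <:+: α}.ncard)
    (hq : q = {γ : List A | γ <:+: β}.ncard)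
    (hr : r = β.length) :
    {γ : List (Option A) | γ <:+: substC α β}.ncard ≤ (p - 1) * r ^ 2 + q ∧
    {γ : List (Option A) | γ <:+: substC α β}.ncard ≤ p * r ^ 2 + 1 := by
  have hblock : ∀ x : Option A, (x.elim (β.map some) fun a => [a]).length ≤ r := by
    rintro (_ | _) <;> simp [hr, Nat.one_le_iff_ne_zero, hβ]
  have hsubst : {γ | γ <:+: substC α β}.ncard ≤ (p - 1) * r ^ 2 + 1 :=
    hp ▸ List.ncard_setOf_isInfix_flatMap_le hblock α
  have hq_pos : 1 ≤ q :=
    hq ▸ (Set.ncard_pos (List.finite_setOf_isInfix β)).2 ⟨[], List.nil_infix⟩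
  have hp_le : (p - 1) * r ^ 2 ≤ p * r ^ 2 := Nat.mul_le_mul_right _ (Nat.sub_le p 1)
  exact ⟨by omega, by omega⟩

/-- Let `α` be a string over an alphabet extended with a fresh symbol `c` (in which `c`
occurs) and `β` a non-empty string over the original alphabet. If `p` is the number of
distinct substrings of `α`, `q` the number of distinct substrings of `β`, and
`r = |β|`, then the number of distinct substrings of `α[c := β]` is at most
`(p − 1)·r² + q`, and hence at most `p·r² + 1`. -/
theorem substrings_of_subst_le {A : Type*} (α : List (Option A)) (β : List A)
    (hc : (none : Option A) ∈ α) (hβ : β ≠ [])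
    (p q r : ℕ)
    (hp : p = {γ : List (Option A) | γ <:+: α}.ncard)
    (hq : q = {γ : List A | γ <:+: β}.ncard)
    (hr : r = β.length) :
    {γ : List (Option A) | γ <:+: substC α β}.ncard ≤ (p - 1) * r ^ 2 + q ∧
    {γ : List (Option A) | γ <:+: substC α β}.ncard ≤ p * r ^ 2 + 1 :=
  substrings_of_subst_le_general α β hβ p q r hp hq hr
end

section
/- Let S be a set of strings closed under two injective binary constructor operations (α, β) ↦ Aαβ and (α, β) ↦ Mαβ (prefixing a constructor symbol to the concatenation), and let ξ: S → ℕ be a bijection such that the ξ-tracking functions of both operations are monotonic (i.e., the function (ξ(α), ξ(β)) ↦ ξ(Aαβ) is weakly monotone in each argument, and similarly for M). Then for all α, β ∈ S: ξ(Aαβ) > ξ(α)·ξ(β) and ξ(Mαβ) > ξ(α)·ξ(β). -/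
/-! The tracking function of an injective constructor is injective on `ℕ × ℕ`; being monotone,
it maps the `(x + 1) * (y + 1)` pairs below `(x, y)` to distinct numbers `≤` its value at
`(x, y)`. Hence `ξ α * ξ β + ξ α + ξ β ≤ ξ (c α β)`, which suffices when `ξ α > 0`. When
`ξ α = 0` the claim is `ξ (c α β) ≠ ξ α`, true since `c α β` is longer than `α`. -/

open Finset Function

theorem Finset.card_Icc_le_card_Icc_of_monotone_of_injective {α β : Type*} [Preorder α]
    [Preorder β] [LocallyFiniteOrder α] [LocallyFiniteOrder β] {f : α → β} (hmono : Monotone f)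
    (hinj : Injective f) (a b : α) : #(Icc a b) ≤ #(Icc (f a) (f b)) :=
  card_le_card_of_injOn f
    (fun _ hx => by
      rw [coe_Icc, Set.mem_Icc] at hx
      exact mem_Icc.2 ⟨hmono hx.1, hmono hx.2⟩)
    hinj.injOn

theorem Nat.succ_mul_succ_le_of_monotone_of_injective {f : ℕ × ℕ → ℕ} (hmono : Monotone f)
    (hinj : Injective f) (x y : ℕ) : (x + 1) * (y + 1) ≤ f (x, y) + 1 := by
  have hcard := card_Icc_le_card_Icc_of_monotone_of_injective hmono hinj (0, 0) (x, y)
  simp only [card_Icc_prod, Nat.card_Icc, Nat.sub_zero] at hcard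
  omega

section Tracking

variable {T : Type*} (e : T ≃ ℕ) (g : T → T → T)

def trackingFun (p : ℕ × ℕ) : ℕ :=
  e (g (e.symm p.1) (e.symm p.2))

@[simp]
theorem trackingFun_apply_apply (a b : T) : trackingFun e g (e a, e b) = e (g a b) := by
  simp [trackingFun]

variable {e g}

theorem Function.Injective2.injective_trackingFun (hg : Injective2 g) :
    Injective (trackingFun e g) :=
  e.injective.comp (hg.uncurry.comp (e.symm.injective.prodMap e.symm.injective))

theorem mul_add_add_le_of_monotone_trackingFun (hmono : Monotone (trackingFun e g))
    (hg : Injective2 g) (a b : T) : e a * e b + e a + e b ≤ e (g a b) := by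
  have := Nat.succ_mul_succ_le_of_monotone_of_injective hmono hg.injective_trackingFun (e a) (e b)
  rw [trackingFun_apply_apply] at this
  linarith

theorem mul_lt_of_monotone_trackingFun (hmono : Monotone (trackingFun e g))
    (hg : Injective2 g) (hne : ∀ a b, g a b ≠ a) (a b : T) : e a * e b < e (g a b) := by
  rcases Nat.eq_zero_or_pos (e a) with ha | ha
  · rw [ha, zero_mul]
    exact Nat.pos_of_ne_zero (ha ▸ e.injective.ne (hne a b))
  · nlinarith [mul_add_add_le_of_monotone_trackingFun hmono hg a b]

end Tracking

theorem mul_lt_tracking_cons_append {Γ : Type*} (c : Γ) (S : Set (List Γ))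
    (hC : ∀ ⦃α⦄, α ∈ S → ∀ ⦃β⦄, β ∈ S → c :: (α ++ β) ∈ S)
    (hCinj : ∀ ⦃α⦄, α ∈ S → ∀ ⦃β⦄, β ∈ S → ∀ ⦃α'⦄, α' ∈ S → ∀ ⦃β'⦄, β' ∈ S →
      c :: (α ++ β) = c :: (α' ++ β') → α = α' ∧ β = β')
    (ξ : S → ℕ) (hξ : Bijective ξ)
    (hmono : ∀ α β α' β' : S, ξ α ≤ ξ α' → ξ β ≤ ξ β' →
      ξ ⟨c :: (α.1 ++ β.1), hC α.2 β.2⟩ ≤ ξ ⟨c :: (α'.1 ++ β'.1), hC α'.2 β'.2⟩)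
    (α β : S) : ξ α * ξ β < ξ ⟨c :: (α.1 ++ β.1), hC α.2 β.2⟩ := by
  set e := Equiv.ofBijective ξ hξ
  let g : S → S → S := fun α β => ⟨c :: (α.1 ++ β.1), hC α.2 β.2⟩
  have hg : Injective2 g := fun α β α' β' h => by
    obtain ⟨h₁, h₂⟩ := hCinj α.2 α'.2 β.2 β'.2 (congrArg Subtype.val h)
    exact ⟨Subtype.ext h₁, Subtype.ext h₂⟩
  have hne : ∀ α β, g α β ≠ α := fun α β h => by
    have hlen := congrArg (fun s : S => s.1.length) h
    simp only [g, List.length_cons, List.length_append] at hlen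
    omega
  have hmono' : Monotone (trackingFun e g) := fun p q ⟨h₁, h₂⟩ =>
    hmono _ _ _ _ (by simpa only [e, Equiv.ofBijective_apply_symm_apply]) (by simpa only [e, Equiv.ofBijective_apply_symm_apply])
  exact mul_lt_of_monotone_trackingFun hmono' hg hne α β

/-- Pakhomov's lemma. Let `S` be a set of strings closed under the two injective
binary constructor operations `(α, β) ↦ Aαβ` and `(α, β) ↦ Mαβ` (prefixing a
constructor symbol `a`, resp. `m`, to the concatenation), and let `ξ : S → ℕ` be a
bijection whose ξ-tracking functions of both operations are monotonic. Then for all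
`α, β ∈ S`: `ξ(Aαβ) > ξ(α)·ξ(β)` and `ξ(Mαβ) > ξ(α)·ξ(β)`. -/
theorem tracking_monotone_gt_mul {Γ : Type*} (a m : Γ) (S : Set (List Γ))
    (hA : ∀ ⦃α⦄, α ∈ S → ∀ ⦃β⦄, β ∈ S → a :: (α ++ β) ∈ S)
    (hM : ∀ ⦃α⦄, α ∈ S → ∀ ⦃β⦄, β ∈ S → m :: (α ++ β) ∈ S)
    (hAinj : ∀ ⦃α⦄, α ∈ S → ∀ ⦃β⦄, β ∈ S → ∀ ⦃α'⦄, α' ∈ S → ∀ ⦃β'⦄, β' ∈ S →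
      a :: (α ++ β) = a :: (α' ++ β') → α = α' ∧ β = β')
    (hMinj : ∀ ⦃α⦄, α ∈ S → ∀ ⦃β⦄, β ∈ S → ∀ ⦃α'⦄, α' ∈ S → ∀ ⦃β'⦄, β' ∈ S →
      m :: (α ++ β) = m :: (α' ++ β') → α = α' ∧ β = β')
    (ξ : S → ℕ) (hξ : Function.Bijective ξ)
    (hAmono : ∀ α β α' β' : S, ξ α ≤ ξ α' → ξ β ≤ ξ β' →
      ξ ⟨a :: (α.1 ++ β.1), hA α.2 β.2⟩ ≤ ξ ⟨a :: (α'.1 ++ β'.1), hA α'.2 β'.2⟩)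
    (hMmono : ∀ α β α' β' : S, ξ α ≤ ξ α' → ξ β ≤ ξ β' →
      ξ ⟨m :: (α.1 ++ β.1), hM α.2 β.2⟩ ≤ ξ ⟨m :: (α'.1 ++ β'.1), hM α'.2 β'.2⟩) :
    ∀ α β : S, ξ α * ξ β < ξ ⟨a :: (α.1 ++ β.1), hA α.2 β.2⟩ ∧
      ξ α * ξ β < ξ ⟨m :: (α.1 ++ β.1), hM α.2 β.2⟩ :=
  fun α β => ⟨mul_lt_tracking_cons_append a S hA hAinj ξ hξ hAmono α β,
    mul_lt_tracking_cons_append m S hM hMinj ξ hξ hMmono α β⟩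
end

section
/- Let ξ be a numbering of a language L satisfying (M3): ξ(t) < ξ(A) whenever the closed term t occurs strictly in the formula A, and (M5): ev(t) ≤ ξ(t) for every closed term t. Then for every formula A(x) and every closed term t, it is not the case that ev(t) = ξ(A(t)). In other words, no strong fixed-point term exists. -/
/-- Let `ξ` be a numbering satisfying (M3): `ξ t < ξ A` whenever the closed term `t`
occurs strictly in the formula `A`, and (M5, domination): `ev t ≤ ξ t` for every
closed term `t`. Then for every formula `A(x)` (with `x` occurring in it) and every
closed term `t`, it is not the case that `ev t = ξ(A(t))`: no strong fixed-point term
exists. -/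
theorem no_strong_fixed_point {Fm FmX Tm : Type*}
    (subst : FmX → Tm → Fm)
    (occursIn : Tm → Fm → Prop)
    (ev : Tm → ℕ)
    (ξ : Fm ⊕ Tm → ℕ)
    (M3 : ∀ (t : Tm) (A : Fm), occursIn t A → ξ (Sum.inr t) < ξ (Sum.inl A))
    (M5 : ∀ t : Tm, ev t ≤ ξ (Sum.inr t)) :
    ∀ A : FmX, (∀ u : Tm, occursIn u (subst A u)) →
      ∀ t : Tm, ev t ≠ ξ (Sum.inl (subst A t)) := by
  intro A hA t h
  refine lt_irrefl (ξ (Sum.inl (subst A t))) ?_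
  calc ξ (Sum.inl (subst A t)) = ev t := h.symm
    _ ≤ ξ (Sum.inr t) := M5 t
    _ < ξ (Sum.inl (subst A t)) := M3 t _ (hA t)
end
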